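/- Under the bootstrap labeling distribution, the covariance of the standardized graph statistic R(G(Z_N)) and the centered bootstrap count B-bar_N = (B_N - N1)/sqrt(N) (where B_N is the number of labels equal to 1) equals (N1*N2/N^2) + (N-2)*(N1^2*N2/N^3) - N1^2*N2/N^2, which converges to (1/2)*r*(1-2p) as N -> infinity with N1/N -> p, where r = 2*p*(1-p). -/

import Mathlib

open Finset Filter

/-! With `q = N1/N`, the factors `√N` and `1/√N` cancel and `B̄` is centered, so the covariance is
the average over edges `(a, b)` of `E[1{c_a = 1, c_b = 2} · ∑ᵢ (1{c_i = 1} - q)]`. The labels are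
independent and each summand is centered, so only `i = a` and `i = b` contribute, giving
`q(1-q)² - q²(1-q) = q(1-q)(1-2q)`. The paper's closed form is the same quantity, which makes the
limit `p(1-p)(1-2p)` immediate. -/

/-- Expectation under i.i.d. bootstrap labeling with `P(c i = 0) = N1/N`, `P(c i = 1) = N2/N`. -/
noncomputable def bootExp (N N1 N2 : ℕ) (f : (Fin N → Fin 2) → ℝ) : ℝ :=
  ∑ c : Fin N → Fin 2, (∏ i, (if c i = 0 then (N1 : ℝ) / N else (N2 : ℝ) / N)) * f c

noncomputable def labelExp (N N1 N2 : ℕ) (g : Fin 2 → ℝ) : ℝ :=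
  ∑ x : Fin 2, (if x = 0 then (N1 : ℝ) / N else (N2 : ℝ) / N) * g x

section

variable {N N1 N2 : ℕ}

lemma natCast_div_eq_one_sub (hN : 0 < N) (hsum : N1 + N2 = N) :
    (N2 : ℝ) / N = 1 - N1 / N := by
  rw [eq_sub_iff_add_eq, ← add_div, ← Nat.cast_add, add_comm, hsum, div_self (by positivity)]

lemma bootExp_sub (f g : (Fin N → Fin 2) → ℝ) :
    bootExp N N1 N2 (fun c => f c - g c) = bootExp N N1 N2 f - bootExp N N1 N2 g := by
  simp only [bootExp, mul_sub, sum_sub_distrib]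

lemma bootExp_const_mul (a : ℝ) (f : (Fin N → Fin 2) → ℝ) :
    bootExp N N1 N2 (fun c => a * f c) = a * bootExp N N1 N2 f := by
  simp only [bootExp, mul_sum, mul_left_comm]

lemma bootExp_sum {ι : Type*} (s : Finset ι) (f : ι → (Fin N → Fin 2) → ℝ) :
    bootExp N N1 N2 (fun c => ∑ j ∈ s, f j c) = ∑ j ∈ s, bootExp N N1 N2 (f j) := by
  simp only [bootExp, mul_sum]
  exact sum_comm

lemma bootExp_prod_univ (g : Fin N → Fin 2 → ℝ) :
    bootExp N N1 N2 (fun c => ∏ i, g i (c i)) = ∏ i, labelExp N N1 N2 (g i) := by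
  simp only [bootExp, labelExp, Fintype.prod_sum, ← prod_mul_distrib]

lemma labelExp_one (hN : 0 < N) (hsum : N1 + N2 = N) : labelExp N N1 N2 (fun _ => 1) = 1 := by
  simp [labelExp, natCast_div_eq_one_sub hN hsum]

lemma labelExp_centered (hN : 0 < N) (hsum : N1 + N2 = N) :
    labelExp N N1 N2 (fun x => (if x = 0 then 1 else 0) - (N1 : ℝ) / N) = 0 := by
  simp [labelExp, natCast_div_eq_one_sub hN hsum, mul_comm]

lemma bootExp_prod (hN : 0 < N) (hsum : N1 + N2 = N) (s : Finset (Fin N))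
    (g : Fin N → Fin 2 → ℝ) :
    bootExp N N1 N2 (fun c => ∏ i ∈ s, g i (c i)) = ∏ i ∈ s, labelExp N N1 N2 (g i) := by
  have key := bootExp_prod_univ (N1 := N1) (N2 := N2) (fun i x => if i ∈ s then g i x else 1)
  have hlab : ∀ i, labelExp N N1 N2 (fun x => if i ∈ s then g i x else 1)
      = if i ∈ s then labelExp N N1 N2 (g i) else 1 := by
    intro i
    split_ifs
    · rfl
    · exact labelExp_one hN hsum
  simpa only [hlab, prod_ite_mem, univ_inter] using key

lemma bootExp_comp_eval (hN : 0 < N) (hsum : N1 + N2 = N) (i : Fin N) (g : Fin 2 → ℝ) :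
    bootExp N N1 N2 (fun c => g (c i)) = labelExp N N1 N2 g := by
  simpa using bootExp_prod hN hsum {i} (fun _ => g)

lemma bootExp_mul_comp_eval (hN : 0 < N) (hsum : N1 + N2 = N) {a b : Fin N} (hab : a ≠ b)
    (g h : Fin 2 → ℝ) :
    bootExp N N1 N2 (fun c => g (c a) * h (c b)) = labelExp N N1 N2 g * labelExp N N1 N2 h := by
  simpa [prod_pair hab, hab.symm] using
    bootExp_prod hN hsum {a, b} (fun j => if j = a then g else h)

lemma bootExp_mul_mul_comp_eval (hN : 0 < N) (hsum : N1 + N2 = N) {a b d : Fin N}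
    (hab : a ≠ b) (had : a ≠ d) (hbd : b ≠ d) (g h k : Fin 2 → ℝ) :
    bootExp N N1 N2 (fun c => g (c a) * h (c b) * k (c d))
      = labelExp N N1 N2 g * labelExp N N1 N2 h * labelExp N N1 N2 k := by
  simpa [prod_insert, hab, had, hbd, hab.symm, had.symm, hbd.symm, mul_assoc] using
    bootExp_prod hN hsum {a, b, d} (fun j => if j = a then g else if j = b then h else k)

lemma bootExp_crossEdge_mul_centeredCount (hN : 0 < N) (hsum : N1 + N2 = N) {a b : Fin N}
    (hab : a ≠ b) :
    bootExp N N1 N2 (fun c => (if c a = 0 ∧ c b = 1 then (1 : ℝ) else 0)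
        * ∑ i, ((if c i = 0 then (1 : ℝ) else 0) - (N1 : ℝ) / N))
      = (N1 : ℝ) / N * (1 - (N1 : ℝ) / N) * (1 - 2 * ((N1 : ℝ) / N)) := by
  set q : ℝ := (N1 : ℝ) / N
  have hq : (N2 : ℝ) / N = 1 - q := natCast_div_eq_one_sub hN hsum
  set u : Fin 2 → ℝ := fun x => if x = 0 then 1 else 0
  set v : Fin 2 → ℝ := fun x => if x = 1 then 1 else 0
  set w : Fin 2 → ℝ := fun x => u x - q
  have hu : labelExp N N1 N2 u = q := by simp [u, labelExp, q]
  have hv : labelExp N N1 N2 v = 1 - q := by simp [v, labelExp, hq]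
  have hw : labelExp N N1 N2 w = 0 := labelExp_centered hN hsum
  have huw : labelExp N N1 N2 (fun x => u x * w x) = q * (1 - q) := by simp [w, u, labelExp, q]
  have hvw : labelExp N N1 N2 (fun x => v x * w x) = (1 - q) * -q := by
    simp [w, u, v, labelExp, hq]
  have hedge : ∀ x y : Fin 2, (if x = 0 ∧ y = 1 then (1 : ℝ) else 0) = u x * v y := by
    intro x y; simp only [u, v, ite_zero_mul_ite_zero, mul_one]
  simp only [hedge, mul_sum]
  change bootExp N N1 N2 (fun c => ∑ i, u (c a) * v (c b) * w (c i)) = _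
  rw [bootExp_sum, Fintype.sum_eq_add a b hab]
  · have hterm_a : bootExp N N1 N2 (fun c => u (c a) * v (c b) * w (c a))
        = q * (1 - q) * (1 - q) := by
      rw [show (fun c : Fin N → Fin 2 => u (c a) * v (c b) * w (c a))
          = fun c => u (c a) * w (c a) * v (c b) from funext fun c => mul_right_comm _ _ _,
        bootExp_mul_comp_eval hN hsum hab (fun x => u x * w x) v, huw, hv]
    have hterm_b : bootExp N N1 N2 (fun c => u (c a) * v (c b) * w (c b))
        = q * ((1 - q) * -q) := by
      simp only [mul_assoc]
      rw [bootExp_mul_comp_eval hN hsum hab u (fun x => v x * w x), hu, hvw]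
    rw [hterm_a, hterm_b]
    ring
  · rintro i ⟨hia, hib⟩
    rw [bootExp_mul_mul_comp_eval hN hsum hab (Ne.symm hia) (Ne.symm hib), hw, mul_zero]

lemma bootExp_centeredCount (hN : 0 < N) (hsum : N1 + N2 = N) :
    bootExp N N1 N2 (fun c => ∑ i, ((if c i = 0 then (1 : ℝ) else 0) - (N1 : ℝ) / N)) = 0 := by
  rw [bootExp_sum]
  refine sum_eq_zero fun i _ => ?_
  rw [bootExp_comp_eval hN hsum i (fun x => (if x = 0 then 1 else 0) - (N1 : ℝ) / N),
    labelExp_centered hN hsum]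

lemma bootExp_crossEdgeAvg_mul_centeredCount (hN : 0 < N) (hsum : N1 + N2 = N)
    (E : Finset (Fin N × Fin N)) (hE : 0 < E.card) (hloop : ∀ e ∈ E, e.1 ≠ e.2) :
    bootExp N N1 N2 (fun c => (∑ e ∈ E, if c e.1 = 0 ∧ c e.2 = 1 then (1 : ℝ) else 0) / E.card
        * ∑ i, ((if c i = 0 then (1 : ℝ) else 0) - (N1 : ℝ) / N))
      = (N1 : ℝ) / N * (1 - (N1 : ℝ) / N) * (1 - 2 * ((N1 : ℝ) / N)) := by
  have hsplit : (fun c : Fin N → Fin 2 =>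
      (∑ e ∈ E, if c e.1 = 0 ∧ c e.2 = 1 then (1 : ℝ) else 0) / E.card
        * ∑ i, ((if c i = 0 then (1 : ℝ) else 0) - (N1 : ℝ) / N))
      = fun c => (E.card : ℝ)⁻¹ * ∑ e ∈ E, (if c e.1 = 0 ∧ c e.2 = 1 then (1 : ℝ) else 0)
        * ∑ i, ((if c i = 0 then (1 : ℝ) else 0) - (N1 : ℝ) / N) :=
    funext fun c => by rw [← sum_mul]; ring
  rw [hsplit, bootExp_const_mul, bootExp_sum,
    sum_congr rfl fun e he => bootExp_crossEdge_mul_centeredCount hN hsum (hloop e he),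
    sum_const, nsmul_eq_mul, inv_mul_cancel_left₀ (by positivity)]

end

lemma covariance_formula_eq {n n1 n2 : ℝ} (hn : n ≠ 0) (hsum : n1 + n2 = n) :
    n1 * n2 / n ^ 2 + (n - 2) * (n1 ^ 2 * n2 / n ^ 3) - n1 ^ 2 * n2 / n ^ 2
      = n1 / n * (1 - n1 / n) * (1 - 2 * (n1 / n)) := by
  subst hsum
  field_simp
  ring

theorem stmt7_general (N N1 N2 : ℕ) (hsum : N1 + N2 = N)
    (E : Finset (Fin N × Fin N)) (hE : 0 < E.card) (hloop : ∀ e ∈ E, e.1 ≠ e.2) :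
    (bootExp N N1 N2 (fun c =>
        (Real.sqrt N * ((∑ e ∈ E, if c e.1 = 0 ∧ c e.2 = 1 then (1 : ℝ) else 0) / E.card
            - (N1 : ℝ) * N2 / (N : ℝ) ^ 2)) *
        ((1 / Real.sqrt N) * ∑ i : Fin N, ((if c i = 0 then (1 : ℝ) else 0) - (N1 : ℝ) / N)))
      - bootExp N N1 N2 (fun c =>
          Real.sqrt N * ((∑ e ∈ E, if c e.1 = 0 ∧ c e.2 = 1 then (1 : ℝ) else 0) / E.card
            - (N1 : ℝ) * N2 / (N : ℝ) ^ 2))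
        * bootExp N N1 N2 (fun c =>
            (1 / Real.sqrt N) * ∑ i : Fin N, ((if c i = 0 then (1 : ℝ) else 0) - (N1 : ℝ) / N))
      = (N1 : ℝ) * N2 / (N : ℝ) ^ 2 + ((N : ℝ) - 2) * ((N1 : ℝ) ^ 2 * N2 / (N : ℝ) ^ 3)
          - (N1 : ℝ) ^ 2 * N2 / (N : ℝ) ^ 2)
    ∧ ∀ (p : ℝ) (Nf N1f N2f : ℕ → ℕ),
        (∀ k, N1f k + N2f k = Nf k) →
        Tendsto (fun k => (Nf k : ℝ)) atTop atTop →
        Tendsto (fun k => (N1f k : ℝ) / (Nf k : ℝ)) atTop (nhds p) →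
        Tendsto (fun k =>
            (N1f k : ℝ) * (N2f k : ℝ) / (Nf k : ℝ) ^ 2
              + ((Nf k : ℝ) - 2) * ((N1f k : ℝ) ^ 2 * (N2f k : ℝ) / (Nf k : ℝ) ^ 3)
              - (N1f k : ℝ) ^ 2 * (N2f k : ℝ) / (Nf k : ℝ) ^ 2)
          atTop (nhds ((1 / 2) * (2 * p * (1 - p)) * (1 - 2 * p))) := by
  obtain ⟨e₀, -⟩ := card_pos.mp hE
  have hN : 0 < N := e₀.1.pos
  refine ⟨?_, fun p Nf N1f N2f hsumf hNf hpf => ?_⟩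
  · have hsqrt : Real.sqrt N ≠ 0 := by positivity
    rw [covariance_formula_eq (by positivity) (by exact_mod_cast hsum)]
    simp only [mul_mul_mul_comm _ _ (1 / Real.sqrt N), mul_one_div_cancel hsqrt, one_mul,
      sub_mul, bootExp_sub, bootExp_const_mul, bootExp_centeredCount hN hsum,
      bootExp_crossEdgeAvg_mul_centeredCount hN hsum E hE hloop, mul_zero, sub_zero]
  · have hcont : Continuous fun x : ℝ => x * (1 - x) * (1 - 2 * x) := by fun_prop
    have hlim := (hcont.tendsto p).comp hpf
    rw [show (1 / 2) * (2 * p * (1 - p)) * (1 - 2 * p) = p * (1 - p) * (1 - 2 * p) by ring]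
    refine hlim.congr' ?_
    filter_upwards [hNf.eventually_gt_atTop 0] with k hk
    exact (covariance_formula_eq hk.ne' (by exact_mod_cast hsumf k)).symm

/-- Under the bootstrap labeling, the covariance of the standardized graph statistic
`R = √N (T - N1N2/N²)` and the centered bootstrap count `B̄ = (1/√N)∑(1{cᵢ=1} - N1/N)`
equals exactly `N1N2/N² + (N-2)·N1²N2/N³ - N1²N2/N²`; and this expression converges to
`(1/2)·r·(1-2p)` with `r = 2p(1-p)` whenever `N → ∞` and `N1/N → p`. -/
theorem stmt7 (N N1 N2 : ℕ) (hN : 0 < N) (hsum : N1 + N2 = N)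
    (E : Finset (Fin N × Fin N)) (hE : 0 < E.card) (hloop : ∀ e ∈ E, e.1 ≠ e.2) :
    (bootExp N N1 N2 (fun c =>
        (Real.sqrt N * ((∑ e ∈ E, if c e.1 = 0 ∧ c e.2 = 1 then (1 : ℝ) else 0) / E.card
            - (N1 : ℝ) * N2 / (N : ℝ) ^ 2)) *
        ((1 / Real.sqrt N) * ∑ i : Fin N, ((if c i = 0 then (1 : ℝ) else 0) - (N1 : ℝ) / N)))
      - bootExp N N1 N2 (fun c =>
          Real.sqrt N * ((∑ e ∈ E, if c e.1 = 0 ∧ c e.2 = 1 then (1 : ℝ) else 0) / E.card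
            - (N1 : ℝ) * N2 / (N : ℝ) ^ 2))
        * bootExp N N1 N2 (fun c =>
            (1 / Real.sqrt N) * ∑ i : Fin N, ((if c i = 0 then (1 : ℝ) else 0) - (N1 : ℝ) / N))
      = (N1 : ℝ) * N2 / (N : ℝ) ^ 2 + ((N : ℝ) - 2) * ((N1 : ℝ) ^ 2 * N2 / (N : ℝ) ^ 3)
          - (N1 : ℝ) ^ 2 * N2 / (N : ℝ) ^ 2)
    ∧ ∀ (p : ℝ) (Nf N1f N2f : ℕ → ℕ),
        (∀ k, N1f k + N2f k = Nf k) →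
        Tendsto (fun k => (Nf k : ℝ)) atTop atTop →
        Tendsto (fun k => (N1f k : ℝ) / (Nf k : ℝ)) atTop (nhds p) →
        Tendsto (fun k =>
            (N1f k : ℝ) * (N2f k : ℝ) / (Nf k : ℝ) ^ 2
              + ((Nf k : ℝ) - 2) * ((N1f k : ℝ) ^ 2 * (N2f k : ℝ) / (Nf k : ℝ) ^ 3)
              - (N1f k : ℝ) ^ 2 * (N2f k : ℝ) / (Nf k : ℝ) ^ 2)
          atTop (nhds ((1 / 2) * (2 * p * (1 - p)) * (1 - 2 * p))) :=
  stmt7_general N N1 N2 hsum E hE hloop
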